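/- Let F^{(i)}_{(1)1}(t,x,x₁) be the components of a SODE on J¹(ℝ,M) (transforming by the SODE law) and H¹₁₁(t) the Christoffel symbol of a temporal Riemannian metric. Then G^{(i)}_{(1)1} := (1/2)F^{(i)}_{(1)1} + (1/2)H¹₁₁ x₁^i transforms as a spatial semispray, and the SODE d²x^i/dt² + F^{(i)}_{(1)1} = 0 is equivalent to d²x^i/dt² − H¹₁₁ x₁^i + 2G^{(i)}_{(1)1} = 0. -/

import Mathlib

noncomputable section

/-- Partial derivative of `f` with respect to the `j`-th coordinate at `x`. -/
def pd {n : ℕ} (f : (Fin n → ℝ) → ℝ) (x : Fin n → ℝ) (j : Fin n) : ℝ :=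
  deriv (fun s => f (Function.update x j s)) (x j)

/-- Jacobian `∂x̃^k/∂x^j` of the spatial change of coordinates `φ` (with `x̃ = φ x`). -/
def Jac {n : ℕ} (φ : (Fin n → ℝ) → (Fin n → ℝ)) (x : Fin n → ℝ) (k j : Fin n) : ℝ :=
  pd (fun y => φ y k) x j

/-- `dt/dt̃`, expressed at the old time `t` (with `t̃ = a t`). -/
def dtdT (a : ℝ → ℝ) (t : ℝ) : ℝ := (deriv a t)⁻¹

/-- The induced fibre coordinate `x̃₁^k = (∂x̃^k/∂x^j)(dt/dt̃) x₁^j`. -/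
def fib {n : ℕ} (a : ℝ → ℝ) (φ : (Fin n → ℝ) → (Fin n → ℝ))
    (t : ℝ) (x v : Fin n → ℝ) (k : Fin n) : ℝ :=
  (∑ j, Jac φ x k j * v j) * dtdT a t

/-- A (global) smooth diffeomorphic change of coordinates `t̃ = a t`, `x̃ = φ x`,
with inverse maps `b` and `ψ`. -/
def IsCoordChange (n : ℕ) (a b : ℝ → ℝ) (φ ψ : (Fin n → ℝ) → (Fin n → ℝ)) : Prop :=
  ContDiff ℝ (⊤ : ℕ∞) a ∧ ContDiff ℝ (⊤ : ℕ∞) b ∧ (∀ t, b (a t) = t) ∧ (∀ s, a (b s) = s) ∧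
    (∀ t, deriv a t ≠ 0) ∧ ContDiff ℝ (⊤ : ℕ∞) φ ∧ ContDiff ℝ (⊤ : ℕ∞) ψ ∧
    (∀ x, ψ (φ x) = x) ∧ (∀ y, φ (ψ y) = y)

/-- Smoothness of a local object on the 1-jet space. -/
def SmoothJet {n : ℕ} (G : ℝ → (Fin n → ℝ) → (Fin n → ℝ) → Fin n → ℝ) : Prop :=
  ContDiff ℝ (⊤ : ℕ∞) (fun p : ℝ × (Fin n → ℝ) × (Fin n → ℝ) => G p.1 p.2.1 p.2.2)

/-- The common transformation law of temporal semisprays (`c = 2`) and of the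
temporal components of nonlinear connections (`c = 1`):
`c·H̃^{(k)} = c·H^{(j)} (dt/dt̃)² ∂x̃^k/∂x^j − (dt/dt̃) ∂x̃₁^k/∂t`. -/
def TemporalLaw {n : ℕ} (a : ℝ → ℝ) (φ : (Fin n → ℝ) → (Fin n → ℝ)) (c : ℝ)
    (H Ht : ℝ → (Fin n → ℝ) → (Fin n → ℝ) → Fin n → ℝ) : Prop :=
  ∀ t x v k, c * Ht (a t) (φ x) (fib a φ t x v) k =
    c * (∑ j, H t x v j * (dtdT a t) ^ 2 * Jac φ x k j)
      - dtdT a t * deriv (fun s => fib a φ s x v k) t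

/-- The spatial semispray transformation law:
`2G̃^{(k)} = 2G^{(j)} (dt/dt̃)² ∂x̃^k/∂x^j − (∂x^m/∂x̃^j)(∂x̃₁^k/∂x^m) x̃₁^j`. -/
def SpatialSemisprayLaw {n : ℕ} (a : ℝ → ℝ) (φ ψ : (Fin n → ℝ) → (Fin n → ℝ))
    (G Gt : ℝ → (Fin n → ℝ) → (Fin n → ℝ) → Fin n → ℝ) : Prop :=
  ∀ t x v k, 2 * Gt (a t) (φ x) (fib a φ t x v) k =
    2 * (∑ j, G t x v j * (dtdT a t) ^ 2 * Jac φ x k j)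
      - ∑ j, ∑ m, Jac ψ (φ x) m j * pd (fun y => fib a φ t y v k) x m
          * fib a φ t x v j

/-- The transformation law of the spatial components of a nonlinear connection:
`Ñ^{(k)}_{(1)l} = N^{(j)}_{(1)i} (dt/dt̃)(∂x^i/∂x̃^l)(∂x̃^k/∂x^j) − (∂x^m/∂x̃^l)(∂x̃₁^k/∂x^m)`. -/
def SpatialConnLaw {n : ℕ} (a : ℝ → ℝ) (φ ψ : (Fin n → ℝ) → (Fin n → ℝ))
    (N Nt : ℝ → (Fin n → ℝ) → (Fin n → ℝ) → Fin n → Fin n → ℝ) : Prop :=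
  ∀ t x v k l, Nt (a t) (φ x) (fib a φ t x v) k l =
    (∑ j, ∑ i, N t x v j i * dtdT a t * Jac ψ (φ x) i l * Jac φ x k j)
      - ∑ m, Jac ψ (φ x) m l * pd (fun y => fib a φ t y v k) x m

/-- The SODE transformation law:
`F̃^{(r)} = F^{(j)} (dt/dt̃)² ∂x̃^r/∂x^j − (dt/dt̃) ∂x̃₁^r/∂t − (∂x^m/∂x̃^j)(∂x̃₁^r/∂x^m) x̃₁^j`. -/
def SODELaw {n : ℕ} (a : ℝ → ℝ) (φ ψ : (Fin n → ℝ) → (Fin n → ℝ))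
    (F Ft : ℝ → (Fin n → ℝ) → (Fin n → ℝ) → Fin n → ℝ) : Prop :=
  ∀ t x v k, Ft (a t) (φ x) (fib a φ t x v) k =
    (∑ j, F t x v j * (dtdT a t) ^ 2 * Jac φ x k j)
      - dtdT a t * deriv (fun s => fib a φ s x v k) t
      - ∑ j, ∑ m, Jac ψ (φ x) m j * pd (fun y => fib a φ t y v k) x m
          * fib a φ t x v j

/-- The transformation law of the temporal Christoffel symbol:
`H̃¹₁₁ = H¹₁₁ (dt/dt̃) + (dt̃/dt)(d²t/dt̃²)`. -/
def TemporalChristoffelLaw (a b H Ht : ℝ → ℝ) : Prop :=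
  ∀ t, Ht (a t) = H t * dtdT a t + deriv a t * deriv (deriv b) (a t)

/-- Given a SODE `F^{(i)}_{(1)1}` and the temporal Christoffel symbol `H¹₁₁`, the local
functions `G^{(i)} = (1/2)F^{(i)} + (1/2)H¹₁₁ x₁^i` form a spatial semispray, and
`d²x^i/dt² + F^{(i)} = 0` is equivalent to `d²x^i/dt² − H¹₁₁ x₁^i + 2G^{(i)} = 0`. -/
theorem sode_induces_spatial_semispray {n : ℕ}
    (a b : ℝ → ℝ) (φ ψ : (Fin n → ℝ) → (Fin n → ℝ))
    (hcc : IsCoordChange n a b φ ψ)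
    (F Ft : ℝ → (Fin n → ℝ) → (Fin n → ℝ) → Fin n → ℝ)
    (hF : SmoothJet F) (hFt : SmoothJet Ft)
    (hFlaw : SODELaw a φ ψ F Ft)
    (H Ht : ℝ → ℝ) (hH : ContDiff ℝ (⊤ : ℕ∞) H)
    (hHrule : TemporalChristoffelLaw a b H Ht) :
    SpatialSemisprayLaw a φ ψ
      (fun t x v i => (1 / 2) * F t x v i + (1 / 2) * H t * v i)
      (fun s y w i => (1 / 2) * Ft s y w i + (1 / 2) * Ht s * w i) ∧
    ∀ (c : ℝ → Fin n → ℝ) (t : ℝ) (i : Fin n),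
      (deriv (fun s => deriv (fun u => c u i) s) t
          + F t (c t) (fun m => deriv (fun u => c u m) t) i = 0 ↔
        deriv (fun s => deriv (fun u => c u i) s) t
          - H t * deriv (fun u => c u i) t
          + 2 * ((1 / 2) * F t (c t) (fun m => deriv (fun u => c u m) t) i
              + (1 / 2) * H t * deriv (fun u => c u i) t) = 0) := by
  obtain ⟨ha, hb, hba, hab, hne, hφ, hψ, hψφ, hφψ⟩ := hcc
  have hda : Differentiable ℝ a := ha.differentiable (by simp)
  have hdb : Differentiable ℝ b := hb.differentiable (by simp)
  have hda' : Differentiable ℝ (deriv a) :=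
    ((contDiff_infty_iff_deriv.mp (ha.of_le (by simp))).2).differentiable (by simp)
  have hdb' : Differentiable ℝ (deriv b) :=
    ((contDiff_infty_iff_deriv.mp (hb.of_le (by simp))).2).differentiable (by simp)
  -- deriv b (a t) = (deriv a t)⁻¹
  have h1 : ∀ t, deriv b (a t) = (deriv a t)⁻¹ := by
    intro t
    have hc : HasDerivAt (fun t => b (a t)) (deriv b (a t) * deriv a t) t :=
      ((hdb (a t)).hasDerivAt).comp t ((hda t).hasDerivAt)
    simp only [hba] at hc
    exact eq_inv_of_mul_eq_one_left (hc.unique (hasDerivAt_id' t))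
  -- second derivative of inverse time map
  have h2 : ∀ t, deriv (deriv b) (a t) =
      -(deriv (deriv a) t) * ((deriv a t)⁻¹) ^ 3 := by
    intro t
    have hc : HasDerivAt (fun t => deriv b (a t))
        (deriv (deriv b) (a t) * deriv a t) t :=
      ((hdb' (a t)).hasDerivAt).comp t ((hda t).hasDerivAt)
    have hinv : HasDerivAt (fun t => (deriv a t)⁻¹)
        (-(deriv (deriv a) t) / (deriv a t) ^ 2) t :=
      ((hda' t).hasDerivAt).inv (hne t)
    have heq : (fun t => deriv b (a t)) = fun t => (deriv a t)⁻¹ := funext h1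
    rw [heq] at hc
    have := hc.unique hinv
    have hne' := hne t
    field_simp at this ⊢
    linarith [this]
  constructor
  · intro t x v k
    have hF' := hFlaw t x v k
    have hH' := hHrule t
    have hne' := hne t
    set C := ∑ j, Jac φ x k j * v j with hC
    -- time derivative of fib
    have hd : deriv (fun s => fib a φ s x v k) t
        = C * (-(deriv (deriv a) t) / (deriv a t) ^ 2) := by
      have hinv : HasDerivAt (fun s => (deriv a s)⁻¹)
          (-(deriv (deriv a) t) / (deriv a t) ^ 2) t :=
        ((hda' t).hasDerivAt).inv (hne t)
      have h3 : HasDerivAt (fun s => C * (deriv a s)⁻¹)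
          (C * (-(deriv (deriv a) t) / (deriv a t) ^ 2)) t := hinv.const_mul C
      have h4 : (fun s => fib a φ s x v k) = fun s => C * (deriv a s)⁻¹ := by
        funext s; simp [fib, dtdT, hC, mul_comm]
      rw [h4]; exact h3.deriv
    have hsplit : ∑ j, ((1 / 2) * F t x v j + (1 / 2) * H t * v j)
          * (dtdT a t) ^ 2 * Jac φ x k j
        = (1 / 2) * (∑ j, F t x v j * (dtdT a t) ^ 2 * Jac φ x k j)
          + (1 / 2) * H t * (dtdT a t) ^ 2 * C := by
      rw [hC, Finset.mul_sum, Finset.mul_sum, ← Finset.sum_add_distrib]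
      exact Finset.sum_congr rfl fun j _ => by ring
    simp only
    rw [hF', hH', hsplit]
    simp only [fib, dtdT, ← hC] at *
    rw [hd, h2 t]
    field_simp
    ring
  · intro c t i
    constructor
    · intro h; linarith [h]
    · intro h; linarith [h]
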